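/- Let H^e = \mathbb{C}\langle Y_\infty \rangle/(| - 1) be the free associative algebra on planar binary trees with the root tree identified with 1, with co-product \Delta^p_e defined on generators recursively by \Delta^p_e(r \vee s) = 1 \otimes (r\vee s) + \sum (r \vee s_{(1)}) \otimes s_{(2)} where \Delta^p_e(s) = \sum s_{(1)} \otimes s_{(2)}. Then for t_n = \sum_{|t|=n} t one has \Delta^p_e(t_n) = \sum_{k=0}^{n} t_k \otimes t_{n-k}. Hence the map b_n \mapsto t_n embeds the Hopf algebra H^{inv} = \mathbb{C}\langle b_1, b_2, \ldots\rangle with co-product \Delta^{inv} b_n = \sum_{k=0}^n b_k \otimes b_{n-k} as a Hopf sub-algebra of H^e. -/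

import Mathlib

noncomputable section

/-- Rooted planar binary trees; a non-trivial tree decomposes uniquely as
`node r s = r ∨ s`. -/
inductive PBT : Type
  | leaf : PBT
  | node : PBT → PBT → PBT
deriving DecidableEq

/-- The number of internal vertices of a planar binary tree. -/
def PBT.size : PBT → ℕ
  | .leaf => 0
  | .node l r => l.size + r.size + 1

/-- The finite set `Y_n` of planar binary trees with `n` internal vertices. -/
def treesOf : ℕ → Finset PBT
  | 0 => {PBT.leaf}
  | n + 1 =>
    (Finset.range (n + 1)).attach.biUnion fun i =>
      ((treesOf i.1) ×ˢ (treesOf (n - i.1))).image fun p => PBT.node p.1 p.2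
decreasing_by
  all_goals
    have := i.2
    simp only [Finset.mem_range] at this
    omega

/-- `H^e = ℂ⟨Y_∞⟩/(| - 1)`: the free associative algebra on the non-trivial planar
binary trees (the root tree `|` being identified with `1`). -/
abbrev He : Type := FreeAlgebra ℂ {t : PBT // t ≠ PBT.leaf}

/-- The generator of `H^e` corresponding to a tree, with `| = 1`. -/
def gen (t : PBT) : He :=
  if h : t = PBT.leaf then 1 else FreeAlgebra.ι ℂ ⟨t, h⟩

/-- The co-product `Δ^p_e` on a generator tree, encoded as a finitely supported function
(left tensor legs are trees): `Δ^p_e(|) = | ⊗ |` and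
`Δ^p_e(r ∨ s) = 1 ⊗ (r ∨ s) + ∑ (r ∨ s₍₁₎) ⊗ s₍₂₎` where `Δ^p_e(s) = ∑ s₍₁₎ ⊗ s₍₂₎`. -/
def De : PBT → (PBT →₀ He)
  | .leaf => Finsupp.single PBT.leaf 1
  | .node r s =>
    Finsupp.single PBT.leaf (gen (PBT.node r s)) +
      Finsupp.mapDomain (fun u : PBT => PBT.node r u) (De s)

open TensorProduct in
/-- Interpret a finitely supported function `PBT →₀ H^e` as the element
`∑_u gen u ⊗ f u` of `H^e ⊗ H^e`. -/
def toTensor (f : PBT →₀ He) : He ⊗[ℂ] He :=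
  f.sum fun u h => gen u ⊗ₜ[ℂ] h

open TensorProduct in
/-- The co-product `Δ^p_e : H^e → H^e ⊗ H^e`, extended as an algebra homomorphism. -/
def Δpe : He →ₐ[ℂ] He ⊗[ℂ] He :=
  FreeAlgebra.lift ℂ fun t : {t : PBT // t ≠ PBT.leaf} => toTensor (De t.1)

/-- `t_n = ∑_{|t| = n} t`, as an element of `H^e`. -/
def te (n : ℕ) : He := ∑ t ∈ treesOf n, gen t

/-! Unfolding the recursion, `Δ^p_e(t)` is the sum of the cuts of `t` along its right spine.
For `r ∨ s` the cuts other than `1 ⊗ (r ∨ s)` are those of `s` with `r` grafted on the left, so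
summing over all trees of size `n + 1 = |r| + |s| + 1`, induction on `n` shows that the left legs
run once over all trees of size `k` while the right legs add up to `t_{n-k}`; the reindexing is
the associativity of the antidiagonal sums. For injectivity, the algebra map sending the right comb
of size `n` to `b_n` and every other tree to `0` is a left inverse of `b_n ↦ t_n`. -/

open Finset TensorProduct

namespace PBT

lemma size_pos {t : PBT} (h : t ≠ leaf) : 0 < t.size := by
  cases t with
  | leaf => exact absurd rfl h
  | node r s => exact Nat.succ_pos _

def comb : ℕ → PBT
  | 0 => leaf
  | n + 1 => node leaf (comb n)

@[simp]
lemma size_comb (n : ℕ) : (comb n).size = n := by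
  induction n with
  | zero => rfl
  | succ n ih => simp [comb, size, ih]

end PBT

open PBT

lemma treesOf_zero : treesOf 0 = {leaf} := by rw [treesOf]

lemma treesOf_succ (n : ℕ) : treesOf (n + 1) =
    (range (n + 1)).attach.biUnion fun i =>
      ((treesOf i.1) ×ˢ (treesOf (n - i.1))).image fun p => node p.1 p.2 := by
  rw [treesOf]

lemma mem_treesOf_iff {t : PBT} {n : ℕ} : t ∈ treesOf n ↔ t.size = n := by
  induction t generalizing n with
  | leaf => cases n <;> simp [treesOf_zero, treesOf_succ, size]
  | node r s ihr ihs =>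
    cases n with
    | zero => simp [treesOf_zero, size]
    | succ n =>
      simp only [treesOf_succ, mem_biUnion, mem_attach, true_and, mem_image, mem_product,
        Prod.exists, node.injEq, Subtype.exists, mem_range, size]
      constructor
      · rintro ⟨i, hi, _, _, ⟨hr, hs⟩, rfl, rfl⟩
        rw [ihr] at hr
        rw [ihs] at hs
        omega
      · intro h
        exact ⟨r.size, by omega, r, s, ⟨ihr.2 rfl, ihs.2 (by omega)⟩, rfl, rfl⟩

lemma sum_treesOf_succ {M : Type*} [AddCommMonoid M] (n : ℕ) (f : PBT → M) :
    ∑ t ∈ treesOf (n + 1), f t =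
      ∑ p ∈ antidiagonal n, ∑ r ∈ treesOf p.1, ∑ s ∈ treesOf p.2, f (node r s) := by
  rw [Nat.sum_antidiagonal_eq_sum_range_succ_mk (M := M), treesOf_succ, sum_biUnion]
  · refine (sum_attach (range (n + 1)) fun i => ∑ t ∈ ((treesOf i) ×ˢ (treesOf (n - i))).image
      (fun p => node p.1 p.2), f t).trans (sum_congr rfl fun i _ => ?_)
    rw [sum_image fun _ _ _ _ h => by simpa [Prod.ext_iff] using h, sum_product]
  · rintro ⟨i, _⟩ - ⟨j, _⟩ - hij
    refine disjoint_left.2 fun t hi hj => hij ?_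
    simp only [mem_image, mem_product, mem_treesOf_iff] at hi hj
    obtain ⟨⟨r, s⟩, ⟨rfl, -⟩, rfl⟩ := hi
    obtain ⟨⟨r', s'⟩, ⟨hr', -⟩, he⟩ := hj
    cases he
    exact Subtype.ext hr'

lemma Finset.Nat.sum_antidiagonal_antidiagonal_snd {M : Type*} [AddCommMonoid M] (n : ℕ)
    (f : ℕ → ℕ → ℕ → M) :
    ∑ p ∈ antidiagonal n, ∑ q ∈ antidiagonal p.2, f p.1 q.1 q.2 =
      ∑ p ∈ antidiagonal n, ∑ q ∈ antidiagonal p.1, f q.1 q.2 p.2 := by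
  rw [sum_sigma', sum_sigma']
  refine sum_nbij' (fun x => ⟨(x.1.1 + x.2.1, x.2.2), (x.1.1, x.2.1)⟩)
    (fun x => ⟨(x.2.1, x.2.2 + x.1.2), (x.2.2, x.1.2)⟩) ?_ ?_ ?_ ?_ ?_ <;>
    simp +contextual only [mem_sigma, HasAntidiagonal.mem_antidiagonal, implies_true,
      Sigma.forall, Prod.forall, and_true, and_imp]
  all_goals intros; omega

lemma gen_leaf : gen leaf = 1 := dif_pos rfl

lemma te_zero : te 0 = 1 := by
  rw [te, treesOf_zero, sum_singleton, gen_leaf]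

lemma De_node (r s : PBT) :
    De (node r s) = Finsupp.single leaf (gen (node r s)) + (De s).mapDomain (node r) := by
  rw [De]

lemma toTensor_single (u : PBT) (h : He) : toTensor (Finsupp.single u h) = gen u ⊗ₜ[ℂ] h :=
  Finsupp.sum_single_index (tmul_zero _ _)

lemma toTensor_sum {ι : Type*} (s : Finset ι) (f : ι → PBT →₀ He) :
    toTensor (∑ i ∈ s, f i) = ∑ i ∈ s, toTensor (f i) :=
  (Finsupp.sum_finsetSum_index (fun _ => tmul_zero _ _) fun _ _ _ => tmul_add _ _ _).symm

lemma Δpe_gen (t : PBT) : Δpe (gen t) = toTensor (De t) := by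
  by_cases h : t = leaf
  · subst h
    rw [gen_leaf, map_one, De, toTensor_single, gen_leaf, Algebra.TensorProduct.one_def]
  · rw [gen, dif_neg h, Δpe, FreeAlgebra.lift_ι_apply]

def teTmul (k m : ℕ) : PBT →₀ He := ∑ u ∈ treesOf k, Finsupp.single u (te m)

lemma toTensor_teTmul (k m : ℕ) : toTensor (teTmul k m) = te k ⊗ₜ[ℂ] te m := by
  simp only [teTmul, toTensor_sum, toTensor_single, te, sum_tmul]

lemma teTmul_zero_left (m : ℕ) : teTmul 0 m = Finsupp.single leaf (te m) := by
  rw [teTmul, treesOf_zero, sum_singleton]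

lemma teTmul_succ_left (k m : ℕ) :
    teTmul (k + 1) m =
      ∑ q ∈ antidiagonal k, ∑ r ∈ treesOf q.1, (teTmul q.2 m).mapDomain (node r) := by
  simp only [teTmul, sum_treesOf_succ, Finsupp.mapDomain_finsetSum, Finsupp.mapDomain_single]

lemma sum_De_treesOf_succ (n : ℕ) :
    ∑ t ∈ treesOf (n + 1), De t = Finsupp.single leaf (te (n + 1)) +
      ∑ p ∈ antidiagonal n, ∑ r ∈ treesOf p.1, (∑ s ∈ treesOf p.2, De s).mapDomain (node r) := by
  simp only [sum_treesOf_succ, De_node, sum_add_distrib, Finsupp.mapDomain_finsetSum, te,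
    Finsupp.single_finsetSum]

theorem sum_De_treesOf (n : ℕ) :
    ∑ t ∈ treesOf n, De t = ∑ p ∈ antidiagonal n, teTmul p.1 p.2 := by
  induction n using Nat.strong_induction_on with
  | _ n ih =>
    cases n with
    | zero => rw [treesOf_zero, sum_singleton, Nat.antidiagonal_zero, sum_singleton,
        teTmul_zero_left, te_zero, De]
    | succ n =>
      rw [sum_De_treesOf_succ, Nat.sum_antidiagonal_succ, teTmul_zero_left]
      congr 1
      have hsnd : ∀ p ∈ antidiagonal n, ∑ s ∈ treesOf p.2, De s =
          ∑ q ∈ antidiagonal p.2, teTmul q.1 q.2 := fun p hp =>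
        ih p.2 (by rw [HasAntidiagonal.mem_antidiagonal] at hp; omega)
      rw [sum_congr rfl fun p hp => by rw [hsnd p hp]]
      simp only [teTmul_succ_left, Finsupp.mapDomain_finsetSum]
      rw [sum_congr rfl fun p _ => sum_comm]
      exact Nat.sum_antidiagonal_antidiagonal_snd n fun i a b =>
        ∑ r ∈ treesOf i, (teTmul a b).mapDomain (node r)

theorem Δpe_te (n : ℕ) : Δpe (te n) = ∑ k ∈ range (n + 1), te k ⊗ₜ[ℂ] te (n - k) := by
  rw [te, map_sum, sum_congr rfl fun t _ => Δpe_gen t, ← toTensor_sum, sum_De_treesOf,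
    toTensor_sum, Nat.sum_antidiagonal_eq_sum_range_succ_mk]
  simp only [toTensor_teTmul]

def combProj : He →ₐ[ℂ] FreeAlgebra ℂ {n : ℕ // 0 < n} :=
  FreeAlgebra.lift ℂ fun t =>
    if t.1 = comb t.1.size then FreeAlgebra.ι ℂ ⟨t.1.size, size_pos t.2⟩ else 0

lemma combProj_te {n : ℕ} (hn : 0 < n) : combProj (te n) = FreeAlgebra.ι ℂ ⟨n, hn⟩ := by
  have hgen : ∀ t ∈ treesOf n,
      combProj (gen t) = if t = comb n then FreeAlgebra.ι ℂ ⟨n, hn⟩ else 0 := by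
    intro t ht
    rw [mem_treesOf_iff] at ht
    subst ht
    have hne : t ≠ leaf := by rintro rfl; exact lt_irrefl 0 hn
    rw [gen, dif_neg hne, combProj, FreeAlgebra.lift_ι_apply]
  rw [te, map_sum, sum_congr rfl hgen, sum_ite_eq', if_pos (mem_treesOf_iff.2 (size_comb n))]

lemma combProj_comp_lift_te :
    combProj.comp (FreeAlgebra.lift ℂ fun i : {n : ℕ // 0 < n} => te i.1) = AlgHom.id ℂ _ :=
  FreeAlgebra.hom_ext <| funext fun i => by
    simp only [Function.comp_apply, AlgHom.coe_comp, FreeAlgebra.lift_ι_apply, combProj_te i.2,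
      AlgHom.coe_id, id_eq]

open TensorProduct in
/-- `Δ^p_e(t_n) = ∑_{k=0}^n t_k ⊗ t_{n-k}`; hence the algebra map `H^inv → H^e`,
`b_n ↦ t_n`, is an injective morphism compatible with the co-products, embedding
`H^inv` as a Hopf sub-algebra of `H^e`. -/
theorem Δpe_tn :
    (∀ n : ℕ, Δpe (te n) = ∑ k ∈ Finset.range (n + 1), te k ⊗ₜ[ℂ] te (n - k)) ∧
    Function.Injective
      (FreeAlgebra.lift ℂ (fun i : {n : ℕ // 0 < n} => te i.1) :
        FreeAlgebra ℂ {n : ℕ // 0 < n} →ₐ[ℂ] He) :=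
  ⟨Δpe_te, Function.LeftInverse.injective fun x => AlgHom.congr_fun combProj_comp_lift_te x⟩

end
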